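/- arXiv:2508.21465 — 2 statements merged into one kernel-verified Lean document; each statement's English description precedes it below -/
import Mathlib

section
/- Every L-ring of almost stable range 1 is a ring of right almost stable range 1. -/
/-!
Given `a u + b v + c w = 1`, the two-sided ideals generated by `a`, `b`, `c` are comaximal, so
almost stable range 1 yields `λ` with `R(λa + b)R + RcR = R`. Right Bézout writes
`(λa + b)R + cR = dR`; then `RdR` contains both `λa + b` and `c`, hence is all of `R`, and the
L-ring property makes `d` a unit, so `(λa + b)R + cR = R`.
-/

namespace TwoSidedIdeal

variable {R : Type*} [Ring R]

lemma mul_mem_span_singleton_right (a u : R) : a * u ∈ span {a} :=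
  mul_mem_right _ _ _ (subset_span rfl)

lemma span_singleton_le_iff_mem {x : R} {I : TwoSidedIdeal R} : span {x} ≤ I ↔ x ∈ I := by
  simp [span_le]

lemma span_singleton_sup_sup_eq_top_of_mul_add_mul_add_mul_eq_one {a b c u v w : R}
    (h : a * u + b * v + c * w = 1) : span {a} ⊔ span {b} ⊔ span {c} = ⊤ := by
  rw [← one_mem_iff, ← h]
  exact add_mem _
    (add_mem _ ((le_sup_left.trans le_sup_left : span {a} ≤ _) (mul_mem_span_singleton_right a u))
      ((le_sup_right.trans le_sup_left : span {b} ≤ _) (mul_mem_span_singleton_right b v)))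
    ((le_sup_right : span {c} ≤ _) (mul_mem_span_singleton_right c w))

lemma exists_mul_add_mul_eq_one_of_span_singleton_sup_eq_top {x y d : R}
    (hd : {z : R | ∃ u v : R, z = x * u + y * v} = {z : R | ∃ u : R, z = d * u})
    (hL : span {d} = ⊤ → IsUnit d) (h : span {x} ⊔ span {y} = ⊤) :
    ∃ u v : R, x * u + y * v = 1 := by
  have mem_span_d {z : R} (hz : z ∈ {z : R | ∃ u v : R, z = x * u + y * v}) : z ∈ span {d} := by
    rw [hd] at hz
    obtain ⟨u, rfl⟩ := hz
    exact mul_mem_span_singleton_right d u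
  have hx : x ∈ span {d} := mem_span_d ⟨1, 0, by simp⟩
  have hy : y ∈ span {d} := mem_span_d ⟨0, 1, by simp⟩
  have hd_top : span {d} = ⊤ :=
    eq_top_iff.2 (h ▸ sup_le (span_singleton_le_iff_mem.2 hx) (span_singleton_le_iff_mem.2 hy))
  obtain ⟨e, rfl⟩ := hL hd_top
  have one_mem : (1 : R) ∈ {z : R | ∃ u : R, z = e * u} := ⟨↑e⁻¹, e.mul_inv.symm⟩
  rw [← hd] at one_mem
  obtain ⟨u, v, huv⟩ := one_mem
  exact ⟨u, v, huv.symm⟩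

end TwoSidedIdeal

theorem stmt_11_general {R : Type*} [Ring R]
    (hrBez : ∀ a b : R, ∃ d : R,
      {x : R | ∃ u v : R, x = a * u + b * v} = {x : R | ∃ u : R, x = d * u})
    (hL : ∀ a : R, TwoSidedIdeal.span {a} = ⊤ → IsUnit a)
    (hASR1 : ∀ a b c : R, c ≠ 0 →
      TwoSidedIdeal.span {a} ⊔ TwoSidedIdeal.span {b} ⊔ TwoSidedIdeal.span {c} = ⊤ →
      ∃ l : R, TwoSidedIdeal.span {l * a + b} ⊔ TwoSidedIdeal.span {c} = ⊤) :
    ∀ a b c : R, c ≠ 0 → (∃ u v w : R, a * u + b * v + c * w = 1) →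
      ∃ l : R, ∃ u v : R, (l * a + b) * u + c * v = 1 := by
  rintro a b c hc ⟨u, v, w, h⟩
  obtain ⟨l, hl⟩ :=
    hASR1 a b c hc (TwoSidedIdeal.span_singleton_sup_sup_eq_top_of_mul_add_mul_add_mul_eq_one h)
  obtain ⟨d, hd⟩ := hrBez (l * a + b) c
  exact ⟨l, TwoSidedIdeal.exists_mul_add_mul_eq_one_of_span_singleton_sup_eq_top hd (hL d) hl⟩

/-- Theorem 9: every Bézout L-ring of (two-sided) almost stable range 1 is a
ring of right almost stable range 1. -/
theorem stmt_11 {R : Type*} [Ring R] [Nontrivial R]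
    (hrBez : ∀ a b : R, ∃ d : R,
      {x : R | ∃ u v : R, x = a * u + b * v} = {x : R | ∃ u : R, x = d * u})
    (hlBez : ∀ a b : R, ∃ d : R,
      {x : R | ∃ u v : R, x = u * a + v * b} = {x : R | ∃ u : R, x = u * d})
    (hL : ∀ a : R, TwoSidedIdeal.span {a} = ⊤ → IsUnit a)
    (hASR1 : ∀ a b c : R, c ≠ 0 →
      TwoSidedIdeal.span {a} ⊔ TwoSidedIdeal.span {b} ⊔ TwoSidedIdeal.span {c} = ⊤ →
      ∃ l : R, TwoSidedIdeal.span {l * a + b} ⊔ TwoSidedIdeal.span {c} = ⊤) :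
    ∀ a b c : R, c ≠ 0 → (∃ u v w : R, a * u + b * v + c * w = 1) →
      ∃ l : R, ∃ u v : R, (l * a + b) * u + c * v = 1 :=
  stmt_11_general hrBez hL hASR1
end

section
/- Every Bézout L-ring of almost stable range 1 has stable range 2. -/
/-!
In almost stable range 1 the multiplier `λ` acts on the left, in stable range 2 on the right; the Bézout and L-ring hypotheses bridge the two sides. If `xR + yR = dR` and
`RxR + RyR = R`, then `RdR = R`, so `d` is a unit and `xR + yR = R`: for pairs, two-sided
comaximality already means right unimodularity. Applying almost stable range 1 to the triple
`(yq, p, z)` then produces a right-handed version: from `xp + yq + zw = 1` and `z ≠ 0` one finds `r`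
with `R(x + yr)R + RzR = R`. For a right unimodular row `(a, b, c)` with `a ≠ 0` this gives `m`
with `R(b + cm)R + RaR = R`, hence `aR + (b + cm)R = R`, i.e. stable range 2 with `λ = 0`.
-/

open TwoSidedIdeal

def IsRightBezout (R : Type*) [Ring R] : Prop :=
  ∀ a b : R, ∃ d : R, {x : R | ∃ u v : R, x = a * u + b * v} = {x : R | ∃ u : R, x = d * u}

def IsLRing (R : Type*) [Ring R] : Prop :=
  ∀ a : R, TwoSidedIdeal.span {a} = ⊤ → IsUnit a

def HasAlmostStableRangeOne (R : Type*) [Ring R] : Prop :=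
  ∀ a b c : R, c ≠ 0 →
    TwoSidedIdeal.span {a} ⊔ TwoSidedIdeal.span {b} ⊔ TwoSidedIdeal.span {c} = ⊤ →
    ∃ l : R, TwoSidedIdeal.span {l * a + b} ⊔ TwoSidedIdeal.span {c} = ⊤

section

variable {R : Type*} [Ring R]

theorem IsRightBezout.exists_mul_add_mul_eq_one (hB : IsRightBezout R) (hL : IsLRing R)
    {x y : R} (h : span {x} ⊔ span {y} = ⊤) : ∃ u v : R, x * u + y * v = 1 := by
  obtain ⟨d, hd⟩ := hB x y
  have mem_iff (z : R) : (∃ u v : R, z = x * u + y * v) ↔ ∃ u : R, z = d * u :=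
    Set.ext_iff.1 hd z
  have mem_span_d {z : R} (hz : ∃ u v : R, z = x * u + y * v) : z ∈ span {d} := by
    obtain ⟨u, rfl⟩ := (mem_iff z).1 hz
    exact mul_mem_right _ _ _ (subset_span rfl)
  have hd_top : span {d} = ⊤ := by
    refine top_unique (h ▸ sup_le (span_le.2 ?_) (span_le.2 ?_)) <;> rintro _ rfl
    exacts [mem_span_d ⟨1, 0, by simp⟩, mem_span_d ⟨0, 1, by simp⟩]
  obtain ⟨d', hd'⟩ := (hL d hd_top).exists_right_inv
  obtain ⟨u, v, huv⟩ := (mem_iff 1).2 ⟨d', hd'.symm⟩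
  exact ⟨u, v, huv.symm⟩

theorem HasAlmostStableRangeOne.exists_add_mul_sup_span_eq_top (hA : HasAlmostStableRangeOne R)
    (hB : IsRightBezout R) (hL : IsLRing R) {x y z p q w : R} (hz : z ≠ 0)
    (h : x * p + y * q + z * w = 1) : ∃ r : R, span {x + y * r} ⊔ span {z} = ⊤ := by
  have h_triple : span {y * q} ⊔ span {p} ⊔ span {z} = ⊤ := by
    refine eq_top _ (h ▸ add_mem _ (add_mem _ ?_ ?_) ?_)
    · exact mem_sup_left (mem_sup_right (mul_mem_left _ _ _ (subset_span rfl)))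
    · exact mem_sup_left (mem_sup_left (subset_span rfl))
    · exact mem_sup_right (mul_mem_right _ _ _ (subset_span rfl))
  obtain ⟨k, hk⟩ := hA (y * q) p z hz h_triple
  obtain ⟨s, w', hs⟩ := hB.exists_mul_add_mul_eq_one hL hk
  set t := x + y * (q * s * (1 - k * x))
  -- Modulo `RzR` we have `yq ≡ 1 - xp` and `(kyq + p)s ≡ 1`, so with `P = 1 - px` the element
  -- `(p + Pk)t ≡ px + P(kyq + p)s(1 - kx) + Pkx ≡ px + P = 1`.
  have key : (p + (1 - p * x) * k) * t
      + ((1 - p * x) * (z * w') * (1 - k * x) + p * (z * w) * (s * (1 - k * x))) = 1 := by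
    have hzw : z * w = 1 - x * p - y * q := by rw [← h]; noncomm_ring
    have hzw' : z * w' = 1 - (k * (y * q) + p) * s := by rw [← hs]; noncomm_ring
    rw [hzw, hzw']
    simp only [t]
    noncomm_ring
  have hz_mem : ∀ a b c : R, a * (z * b) * c ∈ span {t} ⊔ span {z} := fun a b c ↦
    mem_sup_right (mul_mem_right _ _ _ (mul_mem_left _ _ _ (mul_mem_right _ _ _ (subset_span rfl))))
  suffices 1 ∈ span {t} ⊔ span {z} from ⟨_, eq_top _ this⟩
  rw [← key]
  exact add_mem _ (mem_sup_left (mul_mem_left _ _ _ (subset_span rfl)))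
    (add_mem _ (hz_mem (1 - p * x) w' (1 - k * x)) (hz_mem p w (s * (1 - k * x))))

end

theorem stmt_12_general {R : Type*} [Ring R]
    (hrBez : ∀ a b : R, ∃ d : R,
      {x : R | ∃ u v : R, x = a * u + b * v} = {x : R | ∃ u : R, x = d * u})
    (hL : ∀ a : R, TwoSidedIdeal.span {a} = ⊤ → IsUnit a)
    (hASR1 : ∀ a b c : R, c ≠ 0 →
      TwoSidedIdeal.span {a} ⊔ TwoSidedIdeal.span {b} ⊔ TwoSidedIdeal.span {c} = ⊤ →
      ∃ l : R, TwoSidedIdeal.span {l * a + b} ⊔ TwoSidedIdeal.span {c} = ⊤) :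
    ∀ a b c : R, (∃ u v w : R, a * u + b * v + c * w = 1) →
      ∃ l m : R, ∃ u v : R, (a + c * l) * u + (b + c * m) * v = 1 := by
  rintro a b c ⟨u, v, w, h⟩
  by_cases ha : a = 0
  · subst ha
    exact ⟨w, 0, 1, v, by simpa [add_comm] using h⟩
  obtain ⟨m, hm⟩ := HasAlmostStableRangeOne.exists_add_mul_sup_span_eq_top hASR1 hrBez hL ha
    (show b * v + c * w + a * u = 1 by rw [← h]; abel)
  obtain ⟨s, t, hst⟩ := IsRightBezout.exists_mul_add_mul_eq_one hrBez hL hm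
  exact ⟨0, m, t, s, by rw [← hst]; noncomm_ring⟩

/-- Theorem 10 (first part): every Bézout L-ring of (two-sided) almost stable
range 1 has stable range 2. -/
theorem stmt_12 {R : Type*} [Ring R] [Nontrivial R]
    (hrBez : ∀ a b : R, ∃ d : R,
      {x : R | ∃ u v : R, x = a * u + b * v} = {x : R | ∃ u : R, x = d * u})
    (hlBez : ∀ a b : R, ∃ d : R,
      {x : R | ∃ u v : R, x = u * a + v * b} = {x : R | ∃ u : R, x = u * d})
    (hL : ∀ a : R, TwoSidedIdeal.span {a} = ⊤ → IsUnit a)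
    (hASR1 : ∀ a b c : R, c ≠ 0 →
      TwoSidedIdeal.span {a} ⊔ TwoSidedIdeal.span {b} ⊔ TwoSidedIdeal.span {c} = ⊤ →
      ∃ l : R, TwoSidedIdeal.span {l * a + b} ⊔ TwoSidedIdeal.span {c} = ⊤) :
    ∀ a b c : R, (∃ u v w : R, a * u + b * v + c * w = 1) →
      ∃ l m : R, ∃ u v : R, (a + c * l) * u + (b + c * m) * v = 1 :=
  stmt_12_general hrBez hL hASR1
end
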